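/- arXiv:2601.18767 — 2 statements merged into one kernel-verified Lean document; each statement's English description precedes it below -/
import Mathlib

section
/- Let U = B_s A_s ⋯ B_1 A_1 be a product of unitaries with common fixed vector ξ of the B_i (B_i ξ = ξ for all i). Then the controlled adjoint satisfies: for all φ ∈ H and α, β ∈ ℂ, (I ⊗ ⟨ξ|) applied to ∏_{i=1}^{s} (|0⟩⟨0| ⊗ B_i† + |1⟩⟨1| ⊗ A_i† B_i†) ((α|0⟩ + β|1⟩) ⊗ φ) (with the i = 1 factor leftmost) equals α ⟨ξ, φ⟩ |0⟩ + β ⟨ξ, U† φ⟩ |1⟩, which coincides with (I ⊗ ⟨ξ|)(|0⟩⟨0| ⊗ I + |1⟩⟨1| ⊗ U†)((α|0⟩ + β|1⟩) ⊗ φ). -/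
/-! The qubit projectors `|0⟩⟨0|`, `|1⟩⟨1|` are orthogonal idempotents summing to `1`, so
`(P, Q) ↦ |0⟩⟨0| ⊗ P + |1⟩⟨1| ⊗ Q` is multiplicative and the product of the controlled factors is
`|0⟩⟨0| ⊗ B₁†⋯Bₛ† + |1⟩⟨1| ⊗ U†`. After contracting with `⟨ξ|`, the `|0⟩` branch is
`⟨ξ, B₁†⋯Bₛ† φ⟩ = ⟨Bₛ⋯B₁ ξ, φ⟩ = ⟨ξ, φ⟩`. -/

open Matrix Kronecker

noncomputable section

/-- Projector `|b⟩⟨b|` on one qubit. -/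
def proj (b : Fin 2) : Matrix (Fin 2) (Fin 2) ℂ :=
  fun i j => if i = b ∧ j = b then 1 else 0

theorem proj_mul_proj (b c : Fin 2) : proj b * proj c = if b = c then proj b else 0 := by
  ext i j
  fin_cases b <;> fin_cases c <;> fin_cases i <;> fin_cases j <;>
    simp [proj, mul_apply]

theorem proj_zero_add_proj_one : proj 0 + proj 1 = 1 := by
  ext i j
  fin_cases i <;> fin_cases j <;> simp [proj, one_apply]

theorem proj_mulVec (b : Fin 2) (x : Fin 2 → ℂ) : proj b *ᵥ x = Pi.single b (x b) := by
  ext i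
  fin_cases b <;> fin_cases i <;> simp [proj, mulVec, dotProduct]

theorem kronecker_mulVec_apply {R l m n p : Type*} [CommSemiring R] [Fintype m] [Fintype p]
    (P : Matrix l m R) (N : Matrix n p R) (x : m → R) (y : p → R) (a : l) (i : n) :
    ((P ⊗ₖ N) *ᵥ fun q : m × p => x q.1 * y q.2) (a, i) = (P *ᵥ x) a * (N *ᵥ y) i := by
  simp only [mulVec, dotProduct, Fintype.sum_prod_type, kroneckerMap_apply, Finset.sum_mul_sum]
  exact Finset.sum_congr rfl fun _ _ => Finset.sum_congr rfl fun _ _ => by ring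

theorem conjTranspose_list_reverse_prod {m α : Type*} [Semiring α] [StarRing α] [Fintype m]
    [DecidableEq m] (l : List (Matrix m m α)) :
    l.reverse.prodᴴ = (l.map conjTranspose).prod := by
  rw [conjTranspose_list_prod, List.map_reverse, List.reverse_reverse]

theorem mulVec_list_prod_of_forall_mulVec_eq {m α : Type*} [Semiring α] [Fintype m]
    [DecidableEq m] (v : m → α) (l : List (Matrix m m α)) (h : ∀ M ∈ l, M *ᵥ v = v) :
    l.prod *ᵥ v = v := by
  induction l with
  | nil => exact one_mulVec v
  | cons M l ih =>
    rw [List.prod_cons, ← mulVec_mulVec, ih fun N hN => h N (List.mem_cons_of_mem _ hN),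
      h M List.mem_cons_self]

section Controlled

variable {ι : Type*} [Fintype ι]

theorem sum_conj_mul_conjTranspose_mulVec_of_mulVec_eq {M : Matrix ι ι ℂ} {ξ : ι → ℂ}
    (h : M *ᵥ ξ = ξ) (φ : ι → ℂ) :
    ∑ i, starRingEnd ℂ (ξ i) * (Mᴴ *ᵥ φ) i = ∑ i, starRingEnd ℂ (ξ i) * φ i := by
  change star ξ ⬝ᵥ Mᴴ *ᵥ φ = star ξ ⬝ᵥ φ
  rw [dotProduct_mulVec, ← star_mulVec, h]

theorem contract_controlled_mulVec (P Q : Matrix ι ι ℂ) (ξ φ : ι → ℂ) (α β : ℂ) :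
    (fun b : Fin 2 => ∑ i, starRingEnd ℂ (ξ i) *
      ((proj 0 ⊗ₖ P + proj 1 ⊗ₖ Q) *ᵥ fun p : Fin 2 × ι => ![α, β] p.1 * φ p.2) (b, i))
    = fun b : Fin 2 => ![α * ∑ i, starRingEnd ℂ (ξ i) * (P *ᵥ φ) i,
        β * ∑ i, starRingEnd ℂ (ξ i) * (Q *ᵥ φ) i] b := by
  ext b
  simp only [add_mulVec, Pi.add_apply, kronecker_mulVec_apply, proj_mulVec, Finset.mul_sum]
  fin_cases b <;> simp [mul_left_comm]

variable [DecidableEq ι]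

def controlledHom : Matrix ι ι ℂ × Matrix ι ι ℂ →* Matrix (Fin 2 × ι) (Fin 2 × ι) ℂ where
  toFun PQ := proj 0 ⊗ₖ PQ.1 + proj 1 ⊗ₖ PQ.2
  map_one' := by
    rw [Prod.fst_one, Prod.snd_one, ← add_kronecker, proj_zero_add_proj_one, one_kronecker_one]
  map_mul' PQ PQ' := by
    simp only [Prod.fst_mul, Prod.snd_mul, add_mul, mul_add, ← mul_kronecker_mul, proj_mul_proj]
    simp

theorem list_prod_controlled (l : List (Matrix ι ι ℂ × Matrix ι ι ℂ)) :
    (l.map fun PQ => proj 0 ⊗ₖ PQ.1 + proj 1 ⊗ₖ PQ.2).prod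
      = proj 0 ⊗ₖ (l.map Prod.fst).prod + proj 1 ⊗ₖ (l.map Prod.snd).prod := by
  have hl : l.prod = ((l.map Prod.fst).prod, (l.map Prod.snd).prod) :=
    Prod.ext (map_list_prod (MonoidHom.fst _ _) l) (map_list_prod (MonoidHom.snd _ _) l)
  exact (map_list_prod controlledHom l).symm.trans (congrArg controlledHom hl)

end Controlled

theorem stmt3_general {ι : Type*} [Fintype ι] [DecidableEq ι] (s : ℕ)
    (A B : Fin s → Matrix ι ι ℂ)
    (ξ : ι → ℂ)
    (hfix : ∀ i, (B i).mulVec ξ = ξ)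
    (φ : ι → ℂ) (α β : ℂ) :
    (fun b : Fin 2 => ∑ i, (starRingEnd ℂ) (ξ i) *
      ((List.ofFn fun i : Fin s =>
          proj 0 ⊗ₖ (B i)ᴴ + proj 1 ⊗ₖ ((A i)ᴴ * (B i)ᴴ)).prod).mulVec
        (fun p : Fin 2 × ι => ![α, β] p.1 * φ p.2) (b, i))
    = (fun b : Fin 2 =>
        ![α * (∑ i, (starRingEnd ℂ) (ξ i) * φ i),
          β * (∑ i, (starRingEnd ℂ) (ξ i) *
            (((List.ofFn fun i : Fin s => B i * A i).reverse.prod)ᴴ).mulVec φ i)] b)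
    ∧
    (fun b : Fin 2 => ∑ i, (starRingEnd ℂ) (ξ i) *
      ((proj 0 ⊗ₖ (1 : Matrix ι ι ℂ) +
          proj 1 ⊗ₖ ((List.ofFn fun i : Fin s => B i * A i).reverse.prod)ᴴ).mulVec
        (fun p : Fin 2 × ι => ![α, β] p.1 * φ p.2) (b, i)))
    = (fun b : Fin 2 =>
        ![α * (∑ i, (starRingEnd ℂ) (ξ i) * φ i),
          β * (∑ i, (starRingEnd ℂ) (ξ i) *
            (((List.ofFn fun i : Fin s => B i * A i).reverse.prod)ᴴ).mulVec φ i)] b) := by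
  have hprod : (List.ofFn fun i => proj 0 ⊗ₖ (B i)ᴴ + proj 1 ⊗ₖ ((A i)ᴴ * (B i)ᴴ)).prod
      = proj 0 ⊗ₖ (List.ofFn B).reverse.prodᴴ
        + proj 1 ⊗ₖ (List.ofFn fun i => B i * A i).reverse.prodᴴ := by
    have h := list_prod_controlled (List.ofFn fun i => ((B i)ᴴ, (A i)ᴴ * (B i)ᴴ))
    simp only [List.map_ofFn, Function.comp_def] at h
    rw [h, conjTranspose_list_reverse_prod, conjTranspose_list_reverse_prod]
    simp only [List.map_ofFn, Function.comp_def, conjTranspose_mul]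
  have hBξ : (List.ofFn B).reverse.prod *ᵥ ξ = ξ :=
    mulVec_list_prod_of_forall_mulVec_eq ξ _ fun M hM => by
      obtain ⟨i, rfl⟩ := List.mem_ofFn.mp (List.mem_reverse.mp hM)
      exact hfix i
  refine ⟨?_, ?_⟩
  · rw [hprod, contract_controlled_mulVec, sum_conj_mul_conjTranspose_mulVec_of_mulVec_eq hBξ]
  · rw [contract_controlled_mulVec, one_mulVec]

/-- with `U = B_s A_s ⋯ B_1 A_1` and common fixed unit vector `ξ` of the `B_i`,
applying `(I ⊗ ⟨ξ|)` to `∏_{i=1}^{s}(|0⟩⟨0| ⊗ B_i† + |1⟩⟨1| ⊗ A_i† B_i†)((α|0⟩+β|1⟩) ⊗ φ)`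
(with the `i = 1` factor leftmost) equals `α⟨ξ,φ⟩|0⟩ + β⟨ξ,U†φ⟩|1⟩`, which also coincides
with `(I ⊗ ⟨ξ|)(|0⟩⟨0| ⊗ I + |1⟩⟨1| ⊗ U†)((α|0⟩+β|1⟩) ⊗ φ)`. -/
theorem stmt3 {ι : Type*} [Fintype ι] [DecidableEq ι] (s : ℕ)
    (A B : Fin s → Matrix ι ι ℂ)
    (hA : ∀ i, A i ∈ Matrix.unitaryGroup ι ℂ)
    (hB : ∀ i, B i ∈ Matrix.unitaryGroup ι ℂ)
    (ξ : ι → ℂ) (hξ : ∑ i, (starRingEnd ℂ) (ξ i) * ξ i = 1)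
    (hfix : ∀ i, (B i).mulVec ξ = ξ)
    (φ : ι → ℂ) (α β : ℂ) :
    (fun b : Fin 2 => ∑ i, (starRingEnd ℂ) (ξ i) *
      ((List.ofFn fun i : Fin s =>
          proj 0 ⊗ₖ (B i)ᴴ + proj 1 ⊗ₖ ((A i)ᴴ * (B i)ᴴ)).prod).mulVec
        (fun p : Fin 2 × ι => ![α, β] p.1 * φ p.2) (b, i))
    = (fun b : Fin 2 =>
        ![α * (∑ i, (starRingEnd ℂ) (ξ i) * φ i),
          β * (∑ i, (starRingEnd ℂ) (ξ i) *
            (((List.ofFn fun i : Fin s => B i * A i).reverse.prod)ᴴ).mulVec φ i)] b)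
    ∧
    (fun b : Fin 2 => ∑ i, (starRingEnd ℂ) (ξ i) *
      ((proj 0 ⊗ₖ (1 : Matrix ι ι ℂ) +
          proj 1 ⊗ₖ ((List.ofFn fun i : Fin s => B i * A i).reverse.prod)ᴴ).mulVec
        (fun p : Fin 2 × ι => ![α, β] p.1 * φ p.2) (b, i)))
    = (fun b : Fin 2 =>
        ![α * (∑ i, (starRingEnd ℂ) (ξ i) * φ i),
          β * (∑ i, (starRingEnd ℂ) (ξ i) *
            (((List.ofFn fun i : Fin s => B i * A i).reverse.prod)ᴴ).mulVec φ i)] b) :=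
  stmt3_general s A B ξ hfix φ α β
end
end

section
/- (k-th power block encoding.) Let H = Σ_{i,j} c_{ij} P(i,j) with λ = Σ|c_{ij}|, and for k ≥ 1 define on 2kn ancilla qubits |R_k⟩ = λ^{-k/2} Σ over k index pairs of ∏_{s=1}^{k} e^{i arg(c_{i_s j_s})} √|c_{i_s j_s}| |i_1⟩|j_1⟩⋯|i_k⟩|j_k⟩, similarly |L_k⟩ without the phases, and W_k acting by W_k(|i_1 j_1 ⋯ i_k j_k⟩ ⊗ φ) = |i_1 j_1 ⋯ i_k j_k⟩ ⊗ ∏_{s=k}^{1} P(i_s, j_s) φ (with P(i_k,j_k) leftmost). Then (⟨L_k| ⊗ I) W_k (|R_k⟩ ⊗ I) = λ^{-k} H^k as an operator on (ℂ²)^{⊗n}. -/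
open Matrix

noncomputable section

/-- Pauli `X`. -/
def X : Matrix (Fin 2) (Fin 2) ℂ := !![0, 1; 1, 0]

/-- Pauli `Z`. -/
def Z : Matrix (Fin 2) (Fin 2) ℂ := !![1, 0; 0, -1]

/-- The `n`-qubit operator `P(i,j) = ⊗_{ℓ=0}^{n-1} Z^{j_ℓ} X^{i_ℓ}`. -/
def P (n : ℕ) (i j : Fin n → Fin 2) :
    Matrix (Fin n → Fin 2) (Fin n → Fin 2) ℂ :=
  fun x y => ∏ ℓ, (Z ^ (j ℓ : ℕ) * X ^ (i ℓ : ℕ)) (x ℓ) (y ℓ)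

/-- Ancilla index for the `k`-fold product: `k` pairs `(i_s, j_s)` of bit strings. -/
abbrev AncK (n k : ℕ) := Fin k → (Fin n → Fin 2) × (Fin n → Fin 2)

/-! Since `W_k` is block diagonal in the ancilla register, the sandwich collapses to one sum over
ancilla strings `a` of `conj (L_k a) * R_k a` times the ordered Pauli product. Each factor
`√|c| · e^{i arg c} √|c|` recombines to `c`, and what remains is the noncommutative expansion of
`H^k` as a sum over `k`-tuples of terms; adding the first index on the right, `H^{k+1} = H^k H`
is what puts `P(i_k, j_k)` leftmost. -/

theorem sum_smul_pow_eq_sum_ofFn_reverse_prod {R A α : Type*} [CommSemiring R] [Semiring A]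
    [Algebra R A] [Fintype α] (f : α → R) (M : α → A) (k : ℕ) :
    (∑ a, f a • M a) ^ k
      = ∑ b : Fin k → α, (∏ s, f (b s)) • (List.ofFn fun s => M (b s)).reverse.prod := by
  induction k with
  | zero => simp
  | succ k ih =>
    have hcons : ∀ (x : α) (g : Fin k → α),
        (∏ s, f ((Fin.cons x g : Fin (k + 1) → α) s)) •
          (List.ofFn fun s => M ((Fin.cons x g : Fin (k + 1) → α) s)).reverse.prod
          = ((∏ s, f (g s)) • (List.ofFn fun s => M (g s)).reverse.prod) * (f x • M x) := by
      intro x g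
      simp only [Fin.prod_univ_succ, Fin.cons_zero, Fin.cons_succ, List.ofFn_succ,
        List.reverse_cons, List.prod_append, List.prod_cons, List.prod_nil, mul_one,
        smul_mul_smul_comm, mul_comm (f x)]
    rw [← (Fin.consEquiv fun _ : Fin (k + 1) => α).sum_comp, Fintype.sum_prod_type]
    simp only [Fin.consEquiv_apply, hcons]
    rw [Finset.sum_comm, ← Finset.sum_mul_sum, ← ih, ← pow_succ]

theorem sum_sum_mul_ite_eq_mul {R ι : Type*} [CommSemiring R] [Fintype ι] [DecidableEq ι]
    (x y z : ι → R) :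
    ∑ a, ∑ b, x a * (if a = b then y b else 0) * z b = ∑ a, x a * z a * y a := by
  simp [mul_ite, ite_mul, mul_right_comm]

theorem Complex.sqrt_norm_mul_exp_arg_mul_sqrt_norm (z : ℂ) :
    (√‖z‖ : ℂ) * (Complex.exp (Complex.I * z.arg) * √‖z‖) = z := by
  have hsq : (√‖z‖ : ℂ) * √‖z‖ = ‖z‖ := by
    exact_mod_cast Real.mul_self_sqrt (norm_nonneg z)
  calc (√‖z‖ : ℂ) * (Complex.exp (Complex.I * z.arg) * √‖z‖)
      = ((√‖z‖ : ℂ) * √‖z‖) * Complex.exp (z.arg * Complex.I) := by ring_nf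
    _ = z := by rw [hsq, Complex.norm_mul_exp_arg_mul_I]

theorem conj_amplitude_mul_phased_amplitude {k : ℕ} {lam : ℝ} (hlam : 0 ≤ lam) (z : Fin k → ℂ) :
    starRingEnd ℂ (((√lam : ℂ) ^ k)⁻¹ * ∏ s, (√‖z s‖ : ℂ)) *
        (((√lam : ℂ) ^ k)⁻¹ * ∏ s, (Complex.exp (Complex.I * (z s).arg) * √‖z s‖))
      = ((lam : ℂ) ^ k)⁻¹ * ∏ s, z s := by
  have hnorm : ((√lam : ℂ) ^ k)⁻¹ * ((√lam : ℂ) ^ k)⁻¹ = ((lam : ℂ) ^ k)⁻¹ := by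
    rw [← mul_inv, ← mul_pow]
    exact_mod_cast congrArg (fun t : ℝ => (t ^ k)⁻¹) (Real.mul_self_sqrt hlam)
  simp only [map_mul, map_inv₀, map_pow, map_prod, Complex.conj_ofReal]
  rw [← hnorm,
    ← Finset.prod_congr rfl fun s _ => Complex.sqrt_norm_mul_exp_arg_mul_sqrt_norm (z s),
    Finset.prod_mul_distrib (f := fun s => (√‖z s‖ : ℂ))]
  ring

theorem stmt11_general (n k : ℕ)
    (c : (Fin n → Fin 2) → (Fin n → Fin 2) → ℂ)
    (lam : ℝ) (hpos : 0 < lam)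
    (Rk Lk : AncK n k → ℂ)
    (hR : Rk = fun a => ((Real.sqrt lam : ℂ) ^ k)⁻¹ *
      ∏ s : Fin k, (Complex.exp (Complex.I * (c (a s).1 (a s).2).arg) *
        (Real.sqrt (‖c (a s).1 (a s).2‖) : ℂ)))
    (hL : Lk = fun a => ((Real.sqrt lam : ℂ) ^ k)⁻¹ *
      ∏ s : Fin k, (Real.sqrt (‖c (a s).1 (a s).2‖) : ℂ))
    (Wk : Matrix (AncK n k × (Fin n → Fin 2)) (AncK n k × (Fin n → Fin 2)) ℂ)
    (hW : Wk = fun x y => if x.1 = y.1 then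
      ((List.ofFn fun s : Fin k => P n (y.1 s).1 (y.1 s).2).reverse.prod) x.2 y.2
      else 0) :
    (fun u v => ∑ a : AncK n k, ∑ b : AncK n k,
        (starRingEnd ℂ) (Lk a) * Wk (a, u) (b, v) * Rk b)
    = ((lam : ℂ) ^ k)⁻¹ • ((∑ i, ∑ j, c i j • P n i j) ^ k) := by
  subst hR hL hW
  ext u v
  dsimp only
  rw [sum_sum_mul_ite_eq_mul]
  simp only [conj_amplitude_mul_phased_amplitude hpos.le fun s => c _ _]
  have hexpand := sum_smul_pow_eq_sum_ofFn_reverse_prod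
    (fun p : (Fin n → Fin 2) × (Fin n → Fin 2) => c p.1 p.2) (fun p => P n p.1 p.2) k
  rw [← Fintype.sum_prod_type' (f := fun i j => c i j • P n i j), hexpand]
  simp only [Matrix.smul_apply, Matrix.sum_apply, smul_eq_mul, Finset.mul_sum, mul_assoc]

/-- `k`-th power block encoding: with `H = Σ_{i,j} c_{ij} P(i,j)`,
`λ = Σ|c_{ij}| > 0`, right/left states `|R_k⟩, |L_k⟩` on `2kn` ancillas and the
select unitary `W_k` applying `∏_{s=k}^{1} P(i_s,j_s)` (with `P(i_k,j_k)` leftmost),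
one has `(⟨L_k| ⊗ I) W_k (|R_k⟩ ⊗ I) = λ^{-k} H^k` as an operator. -/
theorem stmt11 (n k : ℕ) (hk : 1 ≤ k)
    (c : (Fin n → Fin 2) → (Fin n → Fin 2) → ℂ)
    (lam : ℝ) (hlam : lam = ∑ i, ∑ j, ‖c i j‖) (hpos : 0 < lam)
    (Rk Lk : AncK n k → ℂ)
    (hR : Rk = fun a => ((Real.sqrt lam : ℂ) ^ k)⁻¹ *
      ∏ s : Fin k, (Complex.exp (Complex.I * (c (a s).1 (a s).2).arg) *
        (Real.sqrt (‖c (a s).1 (a s).2‖) : ℂ)))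
    (hL : Lk = fun a => ((Real.sqrt lam : ℂ) ^ k)⁻¹ *
      ∏ s : Fin k, (Real.sqrt (‖c (a s).1 (a s).2‖) : ℂ))
    (Wk : Matrix (AncK n k × (Fin n → Fin 2)) (AncK n k × (Fin n → Fin 2)) ℂ)
    (hW : Wk = fun x y => if x.1 = y.1 then
      ((List.ofFn fun s : Fin k => P n (y.1 s).1 (y.1 s).2).reverse.prod) x.2 y.2
      else 0) :
    (fun u v => ∑ a : AncK n k, ∑ b : AncK n k,
        (starRingEnd ℂ) (Lk a) * Wk (a, u) (b, v) * Rk b)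
    = ((lam : ℂ) ^ k)⁻¹ • ((∑ i, ∑ j, c i j • P n i j) ^ k) :=
  stmt11_general n k c lam hpos Rk Lk hR hL Wk hW
end
end
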